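/- Let φ ∈ 𝒮(ℝ^N) with ‖φ‖=1. Then the intertwining formula T̂_ph(z₀)U_φ = U_φ T̂_Sch(z₀) holds for all z₀ ∈ ℝ^{2N}, where T̂_Sch(z₀)ψ(x) = exp((i/ħ)(p₀·x − p₀·x₀/2)) ψ(x−x₀) and T̂_ph(z₀)Ψ(z) = exp(−(i/(2ħ))σ(z,z₀)) Ψ(z−z₀). -/
import Mathlib


open MeasureTheory Complex Real

/-- The standard symplectic form `σ(z,z') = p·x' − p'·x` on `ℝ^N × ℝ^N`. -/
def symp (N : ℕ) (z z' : (Fin N → ℝ) × (Fin N → ℝ)) : ℝ :=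
  (∑ i, z.2 i * z'.1 i) - ∑ i, z'.2 i * z.1 i

/-- The phase-space Heisenberg–Weyl operator `T̂_ph(z₀)`. -/
noncomputable def Tph (N : ℕ) (ℏ : ℝ) (z₀ : (Fin N → ℝ) × (Fin N → ℝ))
    (Ψ : (Fin N → ℝ) × (Fin N → ℝ) → ℂ) : (Fin N → ℝ) × (Fin N → ℝ) → ℂ :=
  fun z => Complex.exp (-(Complex.I / (2 * ℏ)) * symp N z z₀) * Ψ (z - z₀)

/-- The Schrödinger Heisenberg–Weyl operator `T̂_Sch(z₀)`. -/
noncomputable def TSch (N : ℕ) (ℏ : ℝ) (z₀ : (Fin N → ℝ) × (Fin N → ℝ))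
    (ψ : (Fin N → ℝ) → ℂ) : (Fin N → ℝ) → ℂ :=
  fun x => Complex.exp ((Complex.I / ℏ) *
      ((∑ i, z₀.2 i * x i) - (∑ i, z₀.2 i * z₀.1 i) / 2)) * ψ (x - z₀.1)

/-- The Wigner wave-packet transform `U_φ`, as a map to functions on phase space. -/
noncomputable def wavePacket (N : ℕ) (ℏ : ℝ) (φ ψ : (Fin N → ℝ) → ℂ) :
    (Fin N → ℝ) × (Fin N → ℝ) → ℂ :=
  fun z =>
    ((2 * Real.pi * ℏ) ^ (-(N : ℝ) / 2) : ℝ) *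
      Complex.exp (Complex.I * (∑ i, z.2 i * z.1 i) / (2 * ℏ)) *
      ∫ x' : Fin N → ℝ,
        Complex.exp (-Complex.I * (∑ i, z.2 i * x' i) / ℏ) * ψ x' * φ (z.1 - x')

lemma key_exp (u v w : ℂ) (a b c d e f : ℂ) (h : a + b + c = d + e + f) :
    Complex.exp a * (u * Complex.exp b * (Complex.exp c * v * w)) =
      u * Complex.exp d * (Complex.exp e * (Complex.exp f * v) * w) := by
  have h2 : Complex.exp a * Complex.exp b * Complex.exp c =
      Complex.exp d * Complex.exp e * Complex.exp f := by
    rw [← Complex.exp_add, ← Complex.exp_add, ← Complex.exp_add, ← Complex.exp_add, h]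
  calc Complex.exp a * (u * Complex.exp b * (Complex.exp c * v * w))
      = (Complex.exp a * Complex.exp b * Complex.exp c) * (u * v * w) := by ring
    _ = (Complex.exp d * Complex.exp e * Complex.exp f) * (u * v * w) := by rw [h2]
    _ = u * Complex.exp d * (Complex.exp e * (Complex.exp f * v) * w) := by ring

/-- Intertwining: `T̂_ph(z₀) U_φ = U_φ T̂_Sch(z₀)`. -/
theorem Tph_intertwines_wavePacket (N : ℕ) (ℏ : ℝ) (hℏ : 0 < ℏ)
    (φ : SchwartzMap (Fin N → ℝ) ℂ) (hφ : ∫ x : Fin N → ℝ, ‖φ x‖ ^ 2 = 1)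
    (ψ : SchwartzMap (Fin N → ℝ) ℂ) (z₀ : (Fin N → ℝ) × (Fin N → ℝ)) :
    Tph N ℏ z₀ (wavePacket N ℏ (⇑φ) (⇑ψ)) =
      wavePacket N ℏ (⇑φ) (TSch N ℏ z₀ (⇑ψ)) := by
  obtain ⟨x₀, p₀⟩ := z₀
  funext ⟨x, p⟩
  simp only [Tph, TSch, wavePacket, symp, Prod.mk_sub_mk]
  rw [← MeasureTheory.integral_add_right_eq_self (fun x' : Fin N → ℝ =>
      Complex.exp (-Complex.I * ((∑ i, p i * x' i : ℝ) : ℂ) / ℏ) *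
        (Complex.exp (Complex.I / ℏ * (((∑ i, p₀ i * x' i : ℝ) : ℂ) -
          ((∑ i, p₀ i * x₀ i : ℝ) : ℂ) / 2)) * ψ (x' - x₀)) * φ (x - x')) x₀]
  rw [← MeasureTheory.integral_const_mul, ← MeasureTheory.integral_const_mul,
    ← MeasureTheory.integral_const_mul]
  refine congrArg (integral volume) (funext fun x' => ?_)
  simp only [add_sub_cancel_right]
  rw [show x - (x' + x₀) = x - x₀ - x' by abel]
  exact key_exp _ _ _ _ _ _ _ _ _ (by
    push_cast [Pi.sub_apply, Pi.add_apply, sub_mul, mul_sub, mul_add,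
      Finset.sum_sub_distrib, Finset.sum_add_distrib]
    field_simp
    ring)
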